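/- Let G be a finite group, π a set of primes, H a Hall π-subgroup of G, and S a subnormal subgroup of G. Then H ∩ S is a Hall π-subgroup of S. -/

import Mathlib

open scoped Classical Pointwise

/-- `H` is a Hall `π`-subgroup: every prime dividing `|H|` is in `π`,
and no prime dividing the index `|G : H|` is in `π`. -/
def IsHallPi (π : Set ℕ) {G : Type*} [Group G] (H : Subgroup G) : Prop :=
  (∀ q : ℕ, q.Prime → q ∣ Nat.card H → q ∈ π) ∧
  (∀ q : ℕ, q.Prime → q ∣ H.index → q ∉ π)

/-- A subgroup `S` of `G` is subnormal: there is a chain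
`S = c 0 ⊴ c 1 ⊴ ⋯ ⊴ c n = G`. -/
def Subgroup.IsSubnormalIn {G : Type*} [Group G] (S : Subgroup G) : Prop :=
  ∃ (n : ℕ) (c : Fin (n + 1) → Subgroup G), c 0 = S ∧ c (Fin.last n) = ⊤ ∧
    ∀ i : Fin n, c i.castSucc ≤ c i.succ ∧
      ((c i.castSucc).subgroupOf (c i.succ)).Normal

/-- A normal series of `G`: an increasing chain of normal subgroups of `G`
from `⊥` to `⊤` with `n` factors. -/
structure NormalSeries (G : Type*) [Group G] (n : ℕ) where
  s : Fin (n + 1) → Subgroup G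
  mono : Monotone s
  bot_eq : s 0 = ⊥
  top_eq : s (Fin.last n) = ⊤
  normal : ∀ i, (s i).Normal

instance NormalSeries.instNormal {G : Type*} [Group G] {n : ℕ}
    (σ : NormalSeries G n) (i : Fin (n + 1)) : (σ.s i).Normal := σ.normal i

/-- The `i`-th factor of a normal series, realized as the image of `s (i+1)` in
the quotient of `G` by `s i`; it is isomorphic to `s (i+1) / s i`. -/
def NormalSeries.factor {G : Type*} [Group G] {n : ℕ} (σ : NormalSeries G n)
    (i : Fin n) : Subgroup (G ⧸ σ.s i.castSucc) :=
  (σ.s i.succ).map (QuotientGroup.mk' (σ.s i.castSucc))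

/-- `G` is `p`-soluble: it has a normal series each of whose factors is
either a `p`-group or a group of order coprime to `p`. -/
def IsPSoluble (p : ℕ) (G : Type*) [Group G] : Prop :=
  ∃ (n : ℕ) (σ : NormalSeries G n), ∀ i : Fin n,
    IsPGroup p (σ.factor i) ∨ Nat.Coprime (Nat.card (σ.factor i)) p

/-- `X` is an (internal) direct product of non-abelian simple groups
whose orders are divisible by `p`. -/
def IsProdOfNonabelianSimpleDivP (p : ℕ) (X : Type*) [Group X] : Prop :=
  ∃ (ι : Type) (S : ι → Subgroup X),
    (∀ i, (S i).Normal) ∧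
    (∀ i, IsSimpleGroup (S i)) ∧
    (∀ i, ¬ ∀ a b : S i, a * b = b * a) ∧
    (∀ i, p ∣ Nat.card (S i)) ∧
    iSupIndep S ∧ (⨆ i, S i) = ⊤

/-- `λ_p(G) ≤ k`: `G` has a normal series in which every factor is either
`p`-soluble or a direct product of non-abelian simple groups of order
divisible by `p`, with at most `k` non-`p`-soluble factors. -/
def NonPSolubleLengthLE (p : ℕ) (G : Type*) [Group G] (k : ℕ) : Prop :=
  ∃ (n : ℕ) (σ : NormalSeries G n),
    (∀ i : Fin n, IsPSoluble p (σ.factor i) ∨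
      IsProdOfNonabelianSimpleDivP p (σ.factor i)) ∧
    (Finset.univ.filter fun i : Fin n => ¬ IsPSoluble p (σ.factor i)).card ≤ k

/-- The non-`p`-soluble length `λ_p(G)`: the minimum number of non-`p`-soluble
factors in a normal series in which each factor is either `p`-soluble or a
direct product of non-abelian simple groups of order divisible by `p`. -/
noncomputable def nonPSolubleLength (p : ℕ) (G : Type*) [Group G] : ℕ :=
  sInf {k | NonPSolubleLengthLE p G k}

/-- The `p`-length `l_p(G)`: the minimum number of `p`-factors in a normal
series each of whose factors is a `p`-group or a `p'`-group. -/
noncomputable def pLength (p : ℕ) (G : Type*) [Group G] : ℕ :=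
  sInf {k | ∃ (n : ℕ) (σ : NormalSeries G n),
    (∀ i : Fin n, IsPGroup p (σ.factor i) ∨
      Nat.Coprime (Nat.card (σ.factor i)) p) ∧
    (Finset.univ.filter fun i : Fin n => p ∣ Nat.card (σ.factor i)).card ≤ k}

/-- The Fitting height: the minimal length of a normal series with nilpotent
factors. -/
noncomputable def fittingHeight (G : Type*) [Group G] : ℕ :=
  sInf {n | ∃ σ : NormalSeries G n, ∀ i : Fin n, Group.IsNilpotent (σ.factor i)}

/-- The Fitting subgroup: the subgroup generated by all nilpotent normal
subgroups. -/
def fittingSubgroup (G : Type*) [Group G] : Subgroup G :=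
  ⨆ (H : Subgroup G) (_ : H.Normal ∧ Group.IsNilpotent H), H

/-- A group is quasisimple if it is perfect and its central quotient is simple. -/
def IsQuasisimple (Q : Type*) [Group Q] : Prop :=
  commutator Q = ⊤ ∧ IsSimpleGroup (Q ⧸ Subgroup.center Q)

/-- The generalized Fitting subgroup `F*(G)`: generated by the Fitting
subgroup and all subnormal quasisimple subgroups. -/
def genFittingSubgroup (G : Type*) [Group G] : Subgroup G :=
  fittingSubgroup G ⊔
    ⨆ (H : Subgroup G) (_ : H.IsSubnormalIn ∧ IsQuasisimple H), H

/-- `h*(G) ≤ n`: there is a normal series `⊥ = N₀ ≤ ⋯ ≤ Nₙ = G` with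
`N_{i+1}/N_i ≤ F*(G/N_i)`; equivalently, the generalized Fitting series
`F*₁(G) = F*(G)`, `F*ᵢ₊₁(G)/F*ᵢ(G) = F*(G/F*ᵢ(G))` reaches `G` after at most
`n` steps. -/
def GenFittingHeightLE (G : Type*) [Group G] (n : ℕ) : Prop :=
  ∃ σ : NormalSeries G n, ∀ i : Fin n,
    (σ.s i.succ).map (QuotientGroup.mk' (σ.s i.castSucc)) ≤
      genFittingSubgroup (G ⧸ σ.s i.castSucc)

/-- The generalized Fitting height `h*(G)`: the least `h` with `F*_h(G) = G`. -/
noncomputable def genFittingHeight (G : Type*) [Group G] : ℕ :=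
  sInf {n | GenFittingHeightLE G n}

theorem Subgroup.normal_iSup_of_normal {G : Type*} [Group G] {ι : Sort*}
    (f : ι → Subgroup G) (h : ∀ i, (f i).Normal) : (⨆ i, f i).Normal := by
  constructor
  intro x hx g
  refine Subgroup.iSup_induction f (C := fun y => g * y * g⁻¹ ∈ ⨆ i, f i) hx
    (fun i y hy => Subgroup.mem_iSup_of_mem i ((h i).conj_mem y hy g)) ?_ ?_
  · simpa using Subgroup.one_mem _
  · intro a b ha hb
    have : g * (a * b) * g⁻¹ = (g * a * g⁻¹) * (g * b * g⁻¹) := by group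
    rw [this]; exact Subgroup.mul_mem _ ha hb

/-- The `p`-soluble radical: the subgroup generated by all normal `p`-soluble
subgroups. -/
def pSolubleRadical (p : ℕ) (G : Type*) [Group G] : Subgroup G :=
  ⨆ (N : Subgroup G) (_ : N.Normal ∧ IsPSoluble p N), N

instance pSolubleRadical.normal (p : ℕ) (G : Type*) [Group G] :
    (pSolubleRadical p G).Normal := by
  unfold pSolubleRadical
  refine Subgroup.normal_iSup_of_normal _ fun N => ?_
  by_cases h : N.Normal ∧ IsPSoluble p N
  · rw [iSup_pos h]; exact h.1
  · simp only [h, iSup_false]; infer_instance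

/-- `N` is a minimal normal subgroup of `G`. -/
def IsMinimalNormal {G : Type*} [Group G] (N : Subgroup G) : Prop :=
  N.Normal ∧ N ≠ ⊥ ∧ ∀ M : Subgroup G, M.Normal → M ≤ N → M = ⊥ ∨ M = N

/-- The socle: the subgroup generated by all minimal normal subgroups. -/
def socle (G : Type*) [Group G] : Subgroup G :=
  ⨆ (N : Subgroup G) (_ : IsMinimalNormal N), N

instance socle.normal (G : Type*) [Group G] : (socle G).Normal := by
  unfold socle
  refine Subgroup.normal_iSup_of_normal _ fun N => ?_
  by_cases h : IsMinimalNormal N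
  · simp only [h, iSup_pos]; exact h.1
  · simp only [h, iSup_false]; infer_instance

/-- The simple components of the socle: the minimal nontrivial subgroups of `G`
contained in the socle and normal in the socle; for a semisimple socle these
are exactly the simple direct factors of the socle. -/
def socleComponents (G : Type*) [Group G] : Set (Subgroup G) :=
  {N | N ≤ socle G ∧ N ≠ ⊥ ∧ (∀ g ∈ socle G, ∀ x ∈ N, g * x * g⁻¹ ∈ N) ∧
    ∀ M : Subgroup G, M ≤ N → M ≠ ⊥ →
      (∀ g ∈ socle G, ∀ x ∈ M, g * x * g⁻¹ ∈ M) → M = N}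

lemma mem_conj_smul {G : Type*} [Group G] {N : Subgroup G} {g x : G} :
    x ∈ ConjAct.toConjAct g • N ↔ g⁻¹ * x * g ∈ N := by
  rw [Subgroup.mem_pointwise_smul_iff_inv_smul_mem]
  simp [ConjAct.smul_def, mul_assoc]

lemma socleComponents_smul {G : Type*} [Group G] {N : Subgroup G}
    (hN : N ∈ socleComponents G) (g : G) :
    ConjAct.toConjAct g • N ∈ socleComponents G := by
  obtain ⟨h1, h2, h3, h4⟩ := hN
  refine ⟨?_, ?_, ?_, ?_⟩
  · intro x hx
    rw [mem_conj_smul] at hx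
    have := (socle.normal G).conj_mem _ (h1 hx) g
    have e : g * (g⁻¹ * x * g) * g⁻¹ = x := by group
    rwa [e] at this
  · intro hbot
    apply h2
    have := congrArg (fun S => (ConjAct.toConjAct g)⁻¹ • S) hbot
    simpa [Subgroup.smul_bot] using this
  · intro s hs x hx
    rw [mem_conj_smul] at hx ⊢
    have hs' : g⁻¹ * s * g ∈ socle G := by
      have := (socle.normal G).conj_mem _ hs g⁻¹
      simpa using this
    have := h3 _ hs' _ hx
    have e : (g⁻¹ * s * g) * (g⁻¹ * x * g) * (g⁻¹ * s * g)⁻¹ =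
        g⁻¹ * (s * x * s⁻¹) * g := by group
    rwa [e] at this
  · intro M hMle hMne hMsoc
    have key : (ConjAct.toConjAct g)⁻¹ • M = N := by
      apply h4
      · intro x hx
        rw [← map_inv, mem_conj_smul] at hx
        have := hMle hx
        rw [mem_conj_smul] at this
        have e : g⁻¹ * (g⁻¹⁻¹ * x * g⁻¹) * g = x := by group
        rwa [e] at this
      · intro hbot
        apply hMne
        have := congrArg (fun S => ConjAct.toConjAct g • S) hbot
        simpa [smul_inv_smul, Subgroup.smul_bot] using this
      · intro s hs x hx
        rw [← map_inv, mem_conj_smul] at hx ⊢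
        have hs' : g * s * g⁻¹ ∈ socle G := (socle.normal G).conj_mem _ hs g
        have := hMsoc _ hs' _ (by simpa using hx)
        have e : (g * s * g⁻¹) * (g * x * g⁻¹) * (g * s * g⁻¹)⁻¹ =
            g * (s * x * s⁻¹) * g⁻¹ := by group
        rw [e] at this
        simpa using this
    calc M = ConjAct.toConjAct g • ((ConjAct.toConjAct g)⁻¹ • M) :=
          (smul_inv_smul _ _).symm
    _ = ConjAct.toConjAct g • N := by rw [key]

lemma iInf_normalizer_socleComponents_normal {G : Type*} [Group G] :
    (⨅ N ∈ socleComponents G, Subgroup.normalizer (N : Set G)).Normal := by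
  constructor
  intro x hx g
  simp only [Subgroup.mem_iInf] at hx ⊢
  intro N hNmem
  have h1 := socleComponents_smul hNmem g⁻¹
  have h2 := hx _ h1
  rw [Subgroup.mem_normalizer_iff] at h2 ⊢
  intro y
  have h3 := h2 (g⁻¹ * y * g)
  rw [mem_conj_smul, mem_conj_smul] at h3
  have e1 : g⁻¹⁻¹ * (g⁻¹ * y * g) * g⁻¹ = y := by group
  have e2 : g⁻¹⁻¹ * (x * (g⁻¹ * y * g) * x⁻¹) * g⁻¹ =
      (g * x * g⁻¹) * y * (g * x * g⁻¹)⁻¹ := by group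
  rw [e1, e2] at h3
  exact h3

/-- The `p`-kernel subgroup `K_p(G)`: equal to `G` if `G` is `p`-soluble, and
otherwise the full preimage in `G` of the kernel of the permutation action of
`G/R_p(G)` by conjugation on the simple components of the socle of
`G/R_p(G)`, i.e. of the intersection of their normalizers. -/
noncomputable def pKernel (p : ℕ) (G : Type*) [Group G] : Subgroup G :=
  if IsPSoluble p G then ⊤
  else Subgroup.comap (QuotientGroup.mk' (pSolubleRadical p G))
    (⨅ N ∈ socleComponents (G ⧸ pSolubleRadical p G),
      Subgroup.normalizer (N : Set (G ⧸ pSolubleRadical p G)))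

instance pKernel.normal (p : ℕ) (G : Type*) [Group G] : (pKernel p G).Normal := by
  unfold pKernel
  split
  · infer_instance
  · exact iInf_normalizer_socleComponents_normal.comap _

instance MulAut.conjRange_normal {G : Type*} [Group G] :
    (MulAut.conj : G →* MulAut G).range.Normal := by
  constructor
  rintro n ⟨g, rfl⟩ f
  refine ⟨f g, ?_⟩
  ext x
  simp [MulAut.conj_apply, MulAut.mul_apply, map_mul, map_inv]

/-- The Schreier conjecture: the outer automorphism group of every finite
non-abelian simple group is soluble. -/
def SchreierConjecture : Prop :=
  ∀ (S : Type) [Group S] [Finite S], IsSimpleGroup S →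
    (¬ ∀ a b : S, a * b = b * a) →
    IsSolvable (MulAut S ⧸ (MulAut.conj : S →* MulAut S).range)

/-!
For `N` normal, `|N : H ∩ N| = |H N : H|` divides `|G : H|`. Applied inside each step of a
subnormal chain `S = S₀ ⊴ S₁ ⊴ ⋯ ⊴ Sₙ = G`, this gives `|S : H ∩ S| ∣ |G : H|`, so no prime of `π`
divides the index of `H ∩ S` in `S`, while `|H ∩ S|` divides `|H|`.
-/

namespace Subgroup

variable {G : Type*} [Group G]

theorem relIndex_dvd_index_of_normal_right [Finite G] (H N : Subgroup G) [N.Normal] :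
    H.relIndex N ∣ H.index := by
  have hpos : 0 < (H ⊓ N).relIndex H := Nat.pos_of_ne_zero index_ne_zero_of_finite
  have hcount : (H ⊓ N).relIndex H * (H ⊓ N).relIndex N =
      (H ⊓ N).relIndex H * H.relIndex (H ⊔ N) :=
    calc (H ⊓ N).relIndex H * (H ⊓ N).relIndex N
        = (H ⊓ N).relIndex N * N.relIndex (H ⊔ N) := by
          rw [relIndex_sup_right, inf_relIndex_left, mul_comm]
      _ = (H ⊓ N).relIndex (H ⊔ N) := relIndex_mul_relIndex _ _ _ inf_le_right le_sup_right
      _ = (H ⊓ N).relIndex H * H.relIndex (H ⊔ N) :=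
          (relIndex_mul_relIndex _ _ _ inf_le_left le_sup_left).symm
  rw [← inf_relIndex_right, Nat.eq_of_mul_eq_mul_left hpos hcount]
  exact relIndex_dvd_index_of_le le_sup_left

theorem relIndex_dvd_relIndex_of_normal [Finite G] (H : Subgroup G) {K L : Subgroup G}
    (hKL : K ≤ L) [(K.subgroupOf L).Normal] : H.relIndex K ∣ H.relIndex L := by
  rw [← relIndex_subgroupOf hKL]
  exact relIndex_dvd_index_of_normal_right _ _

theorem IsSubnormal.relIndex_dvd_index [Finite G] (H : Subgroup G) {S : Subgroup G}
    (hS : S.IsSubnormal) : H.relIndex S ∣ H.index := by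
  induction hS with
  | top => rw [relIndex_top_right]
  | step K L hKL _ hN ih => exact (relIndex_dvd_relIndex_of_normal H hKL).trans ih

theorem IsSubnormalIn.isSubnormal {S : Subgroup G} (hS : S.IsSubnormalIn) : S.IsSubnormal := by
  obtain ⟨n, c, rfl, hlast, hstep⟩ := hS
  suffices ∀ i, (c i).IsSubnormal from this 0
  refine Fin.reverseInduction (hlast ▸ IsSubnormal.top) fun i hi => ?_
  exact IsSubnormal.step _ _ (hstep i).1 hi (hstep i).2

end Subgroup

theorem IsHallPi.subgroupOf {G : Type*} [Group G] {π : Set ℕ} {H : Subgroup G}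
    (hH : IsHallPi π H) {S : Subgroup G} (hHS : H.relIndex S ∣ H.index) :
    IsHallPi π (H.subgroupOf S) := by
  refine ⟨fun q hq hdvd => hH.1 q hq (hdvd.trans ?_), fun q hq hdvd => hH.2 q hq (hdvd.trans hHS)⟩
  rw [← Subgroup.card_map_of_injective S.subtype_injective, Subgroup.subgroupOf_map_subtype]
  exact Subgroup.card_dvd_of_le inf_le_left

/-- if `H` is a Hall `π`-subgroup of a finite group `G` and
`S` is subnormal in `G`, then `H ∩ S` is a Hall `π`-subgroup of `S`. -/
theorem hall_inter_subnormal {G : Type*} [Group G] [Finite G] (π : Set ℕ)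
    (H S : Subgroup G) (hS : S.IsSubnormalIn) (hH : IsHallPi π H) :
    IsHallPi π ((H ⊓ S).subgroupOf S) := by
  rw [Subgroup.inf_subgroupOf_right]
  exact hH.subgroupOf (hS.isSubnormal.relIndex_dvd_index H)
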